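/- arXiv:math/0111059 — 3 statements merged into one kernel-verified Lean document; each statement's English description precedes it below -/
import Mathlib

section
/- Let m ≥ 1 and k ≥ 0 with k+1 ≤ m, let O ⊆ [m] with 1 ∈ O and #O = k+1, and let i ∈ [k]. Then for every real q > 0: q^{i} · Σ_{π∈P(m,k+1;O)} q^{−rinv(F(π),π)} = Σ_{π∈P(m,k+1;O)} q^{stat_{i+1}(π)}, where the exponents are integers. -/
open Finset Polynomial

/-- A partition of `[n] = {1,…,n}` into `k` nonempty blocks `B₁-⋯-B_k`, indexed so that
`min B₁ < ⋯ < min B_k`, encoded by its restricted-growth word `w : Fin n → Fin k`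
(the element `i+1` of `[n]` lies in the block `B_{w i + 1}`). -/
structure SetPartition (n k : ℕ) where
  w : Fin n → Fin k
  surj : Function.Surjective w
  rgf : ∀ i : Fin n, ∀ c : Fin k, c < w i → ∃ j : Fin n, j < i ∧ w j = c

namespace SetPartition

variable {n k : ℕ}

instance : DecidableEq (SetPartition n k) := fun a b =>
  decidable_of_iff (a.w = b.w) (by cases a; cases b; simp)

noncomputable instance : Fintype (SetPartition n k) :=
  Fintype.ofInjective (fun π => π.w) (fun a b h => by cases a; cases b; simp_all)

/-- The set of openers (smallest elements of their blocks). -/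
def openers (π : SetPartition n k) : Finset (Fin n) :=
  univ.filter fun i => ∀ j, j < i → π.w j ≠ π.w i

/-- The set of closers (largest elements of their blocks). -/
def closers (π : SetPartition n k) : Finset (Fin n) :=
  univ.filter fun i => ∀ j, i < j → π.w j ≠ π.w i

/-- Closers that are not openers (`F_s`). -/
def closersOnly (π : SetPartition n k) : Finset (Fin n) := π.closers \ π.openers

/-- Openers that are not closers (`O_s`). -/
def openersOnly (π : SetPartition n k) : Finset (Fin n) := π.openers \ π.closers

/-- Elements that are neither openers nor closers (`P`, the transients). -/
def transients (π : SetPartition n k) : Finset (Fin n) :=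
  univ \ (π.openers ∪ π.closers)

def ros (π : SetPartition n k) : ℕ :=
  ∑ i, (π.openers.filter fun j => j < i ∧ π.w i < π.w j).card
def rob (π : SetPartition n k) : ℕ :=
  ∑ i, (π.openers.filter fun j => i < j ∧ π.w i < π.w j).card
def rcs (π : SetPartition n k) : ℕ :=
  ∑ i, (π.closers.filter fun j => j < i ∧ π.w i < π.w j).card
def rcb (π : SetPartition n k) : ℕ :=
  ∑ i, (π.closers.filter fun j => i < j ∧ π.w i < π.w j).card
def los (π : SetPartition n k) : ℕ :=
  ∑ i, (π.openers.filter fun j => j < i ∧ π.w j < π.w i).card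
def lob (π : SetPartition n k) : ℕ :=
  ∑ i, (π.openers.filter fun j => i < j ∧ π.w j < π.w i).card
def lcs (π : SetPartition n k) : ℕ :=
  ∑ i, (π.closers.filter fun j => j < i ∧ π.w j < π.w i).card
def lcb (π : SetPartition n k) : ℕ :=
  ∑ i, (π.closers.filter fun j => i < j ∧ π.w j < π.w i).card

def mak (π : SetPartition n k) : ℕ := π.ros + π.lcs
def mak' (π : SetPartition n k) : ℕ := π.lob + π.rcb
def lmak (π : SetPartition n k) : ℤ :=
  (n : ℤ) * ((k : ℤ) - 1) - ((π.los : ℤ) + (π.rcs : ℤ))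
def lmak' (π : SetPartition n k) : ℤ :=
  (n : ℤ) * ((k : ℤ) - 1) - ((π.lcb : ℤ) + (π.rob : ℤ))

/-- `rinv(b,π) = #{a : a < b, w_a > w_b}`. -/
def rinv (π : SetPartition n k) (b : Fin n) : ℕ :=
  (univ.filter fun a => a < b ∧ π.w b < π.w a).card

/-- `nrinv(b,π) = #{a : a > b, w_a > w_b}`. -/
def nrinv (π : SetPartition n k) (b : Fin n) : ℕ :=
  (univ.filter fun a => b < a ∧ π.w b < π.w a).card

/-- `linv(b,π) = #{a : a > b, w_a < w_b}`. -/
def linv (π : SetPartition n k) (b : Fin n) : ℕ :=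
  (univ.filter fun a => b < a ∧ π.w a < π.w b).card

/-- `rinv(X,π) = Σ_{b ∈ X} rinv(b,π)`. -/
def rinvSet (π : SetPartition n k) (X : Finset (Fin n)) : ℕ := ∑ b ∈ X, π.rinv b

/-- `linv(X,π) = Σ_{b ∈ X} linv(b,π)`. -/
def linvSet (π : SetPartition n k) (X : Finset (Fin n)) : ℕ := ∑ b ∈ X, π.linv b

/-- `g(B_c)`: the largest element of the block with index `c`. -/
def blockMax (π : SetPartition n k) (c : Fin k) : Fin n :=
  (univ.filter fun i => π.w i = c).max' (by
    obtain ⟨i, hi⟩ := π.surj c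
    exact ⟨i, mem_filter.2 ⟨mem_univ i, hi⟩⟩)

/-- The block with index `c` is incomplete at stage `m`, i.e. it meets the first `m`
elements of `[n]` but is not contained in them. -/
def IncompleteAt (π : SetPartition n k) (m : ℕ) (c : Fin k) : Prop :=
  (∃ j : Fin n, (j : ℕ) < m ∧ π.w j = c) ∧ ∃ j : Fin n, m ≤ (j : ℕ) ∧ π.w j = c

instance (π : SetPartition n k) (m : ℕ) : DecidablePred (π.IncompleteAt m) := fun c =>
  inferInstanceAs (Decidable
    ((∃ j : Fin n, (j : ℕ) < m ∧ π.w j = c) ∧ ∃ j : Fin n, m ≤ (j : ℕ) ∧ π.w j = c))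

/-- `l_i(π)`: the number of blocks incomplete at stage `i-1`; here the element `i` of `[n]`
is represented by the index `i - 1 : Fin n`, so the first `i - 1` elements are those with
index `< i`. -/
def lTrace (π : SetPartition n k) (i : Fin n) : ℕ :=
  (univ.filter fun c => π.IncompleteAt (i : ℕ) c).card

/-- `γ_i(π)`: one plus the number of blocks incomplete at stage `i` lying to the left of the
block containing `i`. -/
def gammaTrace (π : SetPartition n k) (i : Fin n) : ℕ :=
  1 + (univ.filter fun c => π.IncompleteAt ((i : ℕ) + 1) c ∧ c < π.w i).card

end SetPartition

/-- The `q`-Stirling numbers of the second kind `S_q(n,k) ∈ ℤ[q]`, with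
`S_q(n,k) = q^{k-1} S_q(n-1,k-1) + [k]_q S_q(n-1,k)`, `S_q(0,0) = 1`, and
`S_q(n,k) = 0` when exactly one of `n,k` is zero (whence also for `k > n`). -/
noncomputable def qStirling : ℕ → ℕ → Polynomial ℤ
  | 0, 0 => 1
  | 0, _ + 1 => 0
  | _ + 1, 0 => 0
  | n + 1, k + 1 =>
      X ^ k * qStirling n k + (∑ i ∈ Finset.range (k + 1), X ^ i) * qStirling n (k + 1)


/-!
For adjacent block indices `c ⋖ d` there is an opener-preserving bijection `φ` of
`P(m, k+1; O)` with `rinv(F(φπ)) + nrinv(g(B_d), φπ) + 1 = rinv(F(π)) + nrinv(g(B_c), π)`: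
exchange the letters `c` and `d` at every position that lies after the opener of `B_d` and at
or after `g(B_d)`; the inverse does the same with `g(B_c)` in place of `g(B_d)`. Comparing both
sides block by block, only `B_c` and `B_d` contribute differently, and their contributions
differ by exactly one. Since `nrinv(g(B_{k+1})) = 0`, descending from the last block shows that
over `P(m, k+1; O)` the statistic `rinv(F) + nrinv(g(B_{i+1}))` is distributed as `rinv(F)`
shifted by `k - i`.
-/

theorem CovBy.lt_swap_apply_iff {α : Type*} [LinearOrder α] {c d f x : α} (hcd : c ⋖ d)
    (hf : f ≠ c) : f < Equiv.swap c d x ↔ f < x := by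
  have key : f < c ↔ f < d := ⟨fun h => h.trans hcd.lt, fun h => (hcd.le_of_lt h).lt_of_ne hf⟩
  rcases eq_or_ne x c with rfl | hxc
  · rw [Equiv.swap_apply_left, key]
  rcases eq_or_ne x d with rfl | hxd
  · rw [Equiv.swap_apply_right, key]
  rw [Equiv.swap_apply_of_ne_of_ne hxc hxd]

theorem Equiv.swap_apply_eq_iff_of_ne {α : Type*} [DecidableEq α] {c d f x : α} (hfc : f ≠ c)
    (hfd : f ≠ d) : Equiv.swap c d x = f ↔ x = f := by
  rw [Equiv.swap_apply_eq_iff, Equiv.swap_apply_of_ne_of_ne hfc hfd]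

theorem Fin.castSucc_covBy_succ {k : ℕ} (i : Fin k) : i.castSucc ⋖ i.succ :=
  ⟨Fin.castSucc_lt_succ, fun e h₁ h₂ => by
    rw [Fin.lt_def, Fin.val_castSucc] at h₁
    rw [Fin.lt_def, Fin.val_succ] at h₂
    omega⟩

namespace SetPartition

variable {n K : ℕ}

theorem ext_w {π ρ : SetPartition n K} (h : π.w = ρ.w) : π = ρ := by
  cases π; cases ρ; cases h; rfl

theorem block_nonempty (π : SetPartition n K) (e : Fin K) :
    (univ.filter fun i => π.w i = e).Nonempty :=
  let ⟨i, hi⟩ := π.surj e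
  ⟨i, mem_filter.2 ⟨mem_univ i, hi⟩⟩

noncomputable def blockMin (π : SetPartition n K) (e : Fin K) : Fin n :=
  (univ.filter fun i => π.w i = e).min' (π.block_nonempty e)

theorem w_blockMin (π : SetPartition n K) (e : Fin K) : π.w (π.blockMin e) = e :=
  (mem_filter.1 (min'_mem (univ.filter fun i => π.w i = e) _)).2

theorem blockMin_le (π : SetPartition n K) {e : Fin K} {i : Fin n} (h : π.w i = e) :
    π.blockMin e ≤ i :=
  min'_le _ _ (mem_filter.2 ⟨mem_univ i, h⟩)

theorem w_blockMax (π : SetPartition n K) (e : Fin K) : π.w (π.blockMax e) = e :=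
  (mem_filter.1 (max'_mem (univ.filter fun i => π.w i = e) _)).2

theorem le_blockMax (π : SetPartition n K) {e : Fin K} {i : Fin n} (h : π.w i = e) :
    i ≤ π.blockMax e :=
  le_max' _ _ (mem_filter.2 ⟨mem_univ i, h⟩)

theorem blockMax_le_iff (π : SetPartition n K) {e : Fin K} {a : Fin n} :
    π.blockMax e ≤ a ↔ ∀ b, a < b → π.w b ≠ e :=
  ⟨fun h _ hab hb => (h.trans_lt hab).not_ge (π.le_blockMax hb),
    fun h => not_lt.1 fun hlt => h _ hlt (π.w_blockMax e)⟩

theorem strictMono_blockMin (π : SetPartition n K) : StrictMono π.blockMin := fun c d hcd =>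
  let ⟨_, hj, hjc⟩ := π.rgf (π.blockMin d) c (by rwa [π.w_blockMin])
  (π.blockMin_le hjc).trans_lt hj

theorem blockMin_le_of_le (π : SetPartition n K) {e : Fin K} {i : Fin n} (h : e ≤ π.w i) :
    π.blockMin e ≤ i :=
  (π.strictMono_blockMin.monotone h).trans (π.blockMin_le rfl)

theorem blockMin_le_blockMax (π : SetPartition n K) (e : Fin K) :
    π.blockMin e ≤ π.blockMax e :=
  π.blockMin_le (π.w_blockMax e)

theorem openers_eq_image_blockMin (π : SetPartition n K) :
    π.openers = univ.image π.blockMin := by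
  ext i
  simp only [openers, mem_filter, mem_univ, true_and, mem_image]
  constructor
  · exact fun h => ⟨π.w i,
      (π.blockMin_le rfl).antisymm (not_lt.1 fun hlt => h _ hlt (π.w_blockMin _))⟩
  · rintro ⟨e, rfl⟩ j hj hje
    rw [π.w_blockMin] at hje
    exact hj.not_ge (π.blockMin_le hje)

theorem closers_eq_image_blockMax (π : SetPartition n K) :
    π.closers = univ.image π.blockMax := by
  ext i
  simp only [closers, mem_filter, mem_univ, true_and, mem_image]
  constructor
  · exact fun h => ⟨π.w i,
      (not_lt.1 fun hlt => h _ hlt (π.w_blockMax _)).antisymm (π.le_blockMax rfl)⟩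
  · rintro ⟨e, rfl⟩ j hj hje
    rw [π.w_blockMax] at hje
    exact hj.not_ge (π.le_blockMax hje)

theorem rinvSet_closers (π : SetPartition n K) :
    π.rinvSet π.closers = ∑ e, π.rinv (π.blockMax e) := by
  rw [rinvSet, closers_eq_image_blockMax, sum_image]
  intro c _ d _ h
  simpa only [π.w_blockMax] using congrArg π.w h

theorem rinv_add_nrinv (π : SetPartition n K) (b : Fin n) :
    π.rinv b + π.nrinv b = #{a | π.w b < π.w a} := by
  rw [rinv, nrinv, ← card_union_of_disjoint, ← filter_or]
  · congr 1
    ext a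
    simp only [mem_filter, mem_univ, true_and]
    refine ⟨fun h => h.elim And.right And.right, fun h => ?_⟩
    rcases lt_trichotomy a b with hab | rfl | hab
    · exact .inl ⟨hab, h⟩
    · exact absurd h (lt_irrefl _)
    · exact .inr ⟨hab, h⟩
  · exact disjoint_filter.2 fun a _ h₁ h₂ => (h₁.1.trans h₂.1).false

theorem rinv_add_nrinv_blockMax (π : SetPartition n K) (e : Fin K) :
    π.rinv (π.blockMax e) + π.nrinv (π.blockMax e) = #{a | e < π.w a} := by
  rw [rinv_add_nrinv, w_blockMax]

theorem rinvSet_closers_add_nrinv_blockMax (π : SetPartition n K) {c d : Fin K} (hcd : c ≠ d) :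
    π.rinvSet π.closers + π.nrinv (π.blockMax c) =
      #{a | c < π.w a} + π.rinv (π.blockMax d) + ∑ f ∈ univ \ {c, d}, π.rinv (π.blockMax f) := by
  rw [rinvSet_closers, ← sum_sdiff (subset_univ {c, d}), sum_pair hcd,
    ← rinv_add_nrinv_blockMax]
  ring

theorem nrinv_blockMax_last {k : ℕ} (π : SetPartition n (k + 1)) :
    π.nrinv (π.blockMax (Fin.last k)) = 0 := by
  rw [nrinv, card_eq_zero, filter_eq_empty_iff]
  rintro a - ⟨-, hlt⟩
  rw [π.w_blockMax] at hlt
  exact (Fin.le_last _).not_gt hlt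

theorem card_filter_lt_w_eq_add (π : SetPartition n K) {c d : Fin K} (hcd : c ⋖ d)
    (s : Finset (Fin n)) :
    #{a ∈ s | c < π.w a} = #{a ∈ s | d < π.w a} + #{a ∈ s | π.w a = d} := by
  rw [← card_union_of_disjoint, ← filter_or]
  · congr 1
    ext a
    simp only [mem_filter, hcd.lt_iff_le_right, le_iff_lt_or_eq, eq_comm]
  · exact disjoint_filter.2 fun a _ h₁ h₂ => h₁.ne' h₂

theorem card_block_eq_add_one (π : SetPartition n K) (e : Fin K) :
    #{a | π.w a = e} = #{a | a < π.blockMax e ∧ π.w a = e} + 1 := by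
  rw [← card_insert_of_notMem (a := π.blockMax e) (s := {a | a < π.blockMax e ∧ π.w a = e})
    (by simp)]
  congr 1
  ext a
  simp only [mem_filter, mem_univ, true_and, mem_insert]
  constructor
  · exact fun ha => (π.le_blockMax ha).eq_or_lt.imp id (⟨·, ha⟩)
  · rintro (rfl | ⟨-, ha⟩)
    exacts [π.w_blockMax e, ha]

def ofBlockMin (v : Fin n → Fin K) (m : Fin K → Fin n) (hm : StrictMono m)
    (hvm : ∀ e, v (m e) = e) (hmv : ∀ i, m (v i) ≤ i) : SetPartition n K where
  w := v
  surj e := ⟨m e, hvm e⟩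
  rgf i _ he := ⟨_, (hm he).trans_le (hmv i), hvm _⟩

theorem blockMin_ofBlockMin (v : Fin n → Fin K) (m : Fin K → Fin n) (hm : StrictMono m)
    (hvm : ∀ e, v (m e) = e) (hmv : ∀ i, m (v i) ≤ i) :
    (ofBlockMin v m hm hvm hmv).blockMin = m := by
  set π := ofBlockMin v m hm hvm hmv
  funext e
  refine (π.blockMin_le (hvm e)).antisymm ?_
  simpa only [show v (π.blockMin e) = e from π.w_blockMin e] using hmv (π.blockMin e)

section Swap

variable {c d : Fin K}

noncomputable def swapOn (π : SetPartition n K) (hle : c ≤ d) (T : Finset (Fin n))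
    (hT : ∀ a ∈ T, π.blockMin d < a) : SetPartition n K :=
  ofBlockMin (fun a => if a ∈ T then Equiv.swap c d (π.w a) else π.w a) π.blockMin
    π.strictMono_blockMin
    (fun e => by
      split_ifs with h
      · have hde : d < e := by simpa only [π.strictMono_blockMin.lt_iff_lt] using hT _ h
        rw [π.w_blockMin, Equiv.swap_apply_of_ne_of_ne (hle.trans_lt hde).ne' hde.ne']
      · exact π.w_blockMin e)
    (fun i => by
      split_ifs with h
      · rcases eq_or_ne (π.w i) c with hc | hc
        · rw [hc, Equiv.swap_apply_left]
          exact (hT i h).le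
        rcases eq_or_ne (π.w i) d with hd | hd
        · rw [hd, Equiv.swap_apply_right]
          exact (π.strictMono_blockMin.monotone hle).trans (hT i h).le
        · rw [Equiv.swap_apply_of_ne_of_ne hc hd]
          exact π.blockMin_le rfl
      · exact π.blockMin_le rfl)

variable (π : SetPartition n K) (hle : c ≤ d) {T : Finset (Fin n)}
  (hT : ∀ a ∈ T, π.blockMin d < a)

theorem swapOn_w (a : Fin n) :
    (π.swapOn hle T hT).w a = if a ∈ T then Equiv.swap c d (π.w a) else π.w a :=
  rfl

theorem blockMin_swapOn : (π.swapOn hle T hT).blockMin = π.blockMin :=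
  blockMin_ofBlockMin ..

theorem openers_swapOn : (π.swapOn hle T hT).openers = π.openers := by
  rw [openers_eq_image_blockMin, openers_eq_image_blockMin, blockMin_swapOn]

theorem swapOn_swapOn {T' : Finset (Fin n)} (hT' : ∀ a ∈ T', (π.swapOn hle T hT).blockMin d < a)
    (h : T' = T) : (π.swapOn hle T hT).swapOn hle T' hT' = π := by
  subst h
  refine ext_w (funext fun a => ?_)
  simp only [swapOn_w]
  split_ifs <;> simp

variable {π hle hT}

theorem lt_w_swapOn_iff (hcd : c ⋖ d) {f : Fin K} (hf : f ≠ c) (a : Fin n) :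
    f < (π.swapOn hle T hT).w a ↔ f < π.w a := by
  rw [swapOn_w]
  split_ifs
  exacts [hcd.lt_swap_apply_iff hf, .rfl]

theorem w_swapOn_eq_iff {f : Fin K} (hfc : f ≠ c) (hfd : f ≠ d) (a : Fin n) :
    (π.swapOn hle T hT).w a = f ↔ π.w a = f := by
  rw [swapOn_w]
  split_ifs
  exacts [Equiv.swap_apply_eq_iff_of_ne hfc hfd, .rfl]

theorem blockMax_swapOn {f : Fin K} (hfc : f ≠ c) (hfd : f ≠ d) :
    (π.swapOn hle T hT).blockMax f = π.blockMax f :=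
  (π.le_blockMax ((w_swapOn_eq_iff hfc hfd _).1 (w_blockMax _ f))).antisymm
    (le_blockMax _ ((w_swapOn_eq_iff hfc hfd _).2 (π.w_blockMax f)))

theorem rinv_blockMax_swapOn (hcd : c ⋖ d) {f : Fin K} (hfc : f ≠ c) (hfd : f ≠ d) :
    (π.swapOn hle T hT).rinv ((π.swapOn hle T hT).blockMax f) = π.rinv (π.blockMax f) := by
  rw [rinv, rinv, w_blockMax, w_blockMax, blockMax_swapOn hfc hfd]
  simp only [lt_w_swapOn_iff hcd hfc]

theorem card_lt_w_swapOn (hcd : c ⋖ d) {f : Fin K} (hf : f ≠ c) :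
    #{a | f < (π.swapOn hle T hT).w a} = #{a | f < π.w a} := by
  simp only [lt_w_swapOn_iff hcd hf]

end Swap

section SwapTail

variable {c d : Fin K}

noncomputable def tailAfter (π : SetPartition n K) (d e : Fin K) : Finset (Fin n) :=
  univ.filter fun a => π.blockMin d < a ∧ π.blockMax e ≤ a

theorem mem_tailAfter {π : SetPartition n K} {d e : Fin K} {a : Fin n} :
    a ∈ π.tailAfter d e ↔ π.blockMin d < a ∧ π.blockMax e ≤ a := by
  simp [tailAfter]

noncomputable def swapTail (π : SetPartition n K) (hle : c ≤ d) (e : Fin K) : SetPartition n K :=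
  π.swapOn hle (π.tailAfter d e) fun _ ha => (mem_tailAfter.1 ha).1

variable (π : SetPartition n K) (hle : c ≤ d) (e : Fin K)

theorem swapTail_w (a : Fin n) : (π.swapTail hle e).w a =
    if π.blockMin d < a ∧ π.blockMax e ≤ a then Equiv.swap c d (π.w a) else π.w a := by
  simp only [swapTail, swapOn_w, mem_tailAfter]

theorem openers_swapTail : (π.swapTail hle e).openers = π.openers :=
  openers_swapOn ..

theorem tailAfter_swapTail :
    (π.swapTail hle e).tailAfter d (Equiv.swap c d e) = π.tailAfter d e := by
  ext a
  simp only [mem_tailAfter, swapTail, blockMin_swapOn]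
  refine and_congr_right fun hxa => ⟨fun h => not_lt.1 fun hlt => ?_, fun h => ?_⟩
  · -- `g(B_e)` itself lies in the tail, where the new word reads `swap c d e`
    refine h.not_gt (hlt.trans_le (le_blockMax _ ?_))
    rw [swapOn_w, if_pos (mem_tailAfter.2 ⟨hxa.trans hlt, le_rfl⟩), π.w_blockMax]
  · refine (blockMax_le_iff _).2 fun b hab hb => ?_
    rw [swapOn_w, if_pos (mem_tailAfter.2 ⟨hxa.trans hab, h.trans hab.le⟩),
      (Equiv.swap c d).apply_eq_iff_eq] at hb
    exact (h.trans_lt hab).not_ge (π.le_blockMax hb)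

theorem swapTail_swapTail : (π.swapTail hle e).swapTail hle (Equiv.swap c d e) = π :=
  swapOn_swapOn _ _ _ _ (tailAfter_swapTail π hle e)

end SwapTail

/-- `k - stat_{e+1}(π)` for `π ∈ P(m, k+1)`. -/
def rinvStat (π : SetPartition n K) (e : Fin K) : ℕ :=
  π.rinvSet π.closers + π.nrinv (π.blockMax e)

section Adjacent

variable (π : SetPartition n K) {c d : Fin K} (hcd : c ⋖ d)
include hcd

theorem rinv_blockMax_swapTail :
    (π.swapTail hcd.le d).rinv ((π.swapTail hcd.le d).blockMax c) =
      #{a | a < π.blockMax d ∧ c < π.w a} := by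
  set σ := π.swapTail hcd.le d
  have hxg := π.blockMin_le_blockMax d
  have below : ∀ a < π.blockMax d, σ.w a = π.w a := fun a ha => by
    rw [swapTail_w, if_neg fun h => ha.not_ge h.2]
  have hgc : σ.blockMax c ≤ π.blockMax d := σ.blockMax_le_iff.2 fun b hb hbc => by
    rw [swapTail_w, if_pos ⟨hxg.trans_lt hb, hb.le⟩, Equiv.swap_apply_eq_iff,
      Equiv.swap_apply_left] at hbc
    exact hb.not_ge (π.le_blockMax hbc)
  have hge : ∀ a < π.blockMax d, c < π.w a → a < σ.blockMax c := fun a ha hca => by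
    have hxa : π.blockMin d ≤ a := π.blockMin_le_of_le (hcd.ge_of_gt hca)
    refine ha.trans_le (σ.le_blockMax ?_)
    rw [swapTail_w, if_pos ⟨hxa.trans_lt ha, le_rfl⟩, π.w_blockMax, Equiv.swap_apply_right]
  rw [rinv, σ.w_blockMax]
  congr 1
  ext a
  simp only [mem_filter, mem_univ, true_and]
  constructor
  · rintro ⟨ha, hca⟩
    have ha' := ha.trans_le hgc
    exact ⟨ha', below a ha' ▸ hca⟩
  · rintro ⟨ha, hca⟩
    exact ⟨hge a ha hca, (below a ha).symm ▸ hca⟩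

theorem rinvStat_swapTail :
    π.rinvStat c = (π.swapTail hcd.le d).rinvStat d + 1 := by
  set σ := π.swapTail hcd.le d
  have hπ := π.rinvSet_closers_add_nrinv_blockMax hcd.ne
  have hσ := σ.rinvSet_closers_add_nrinv_blockMax hcd.ne'
  have hrest : ∑ f ∈ univ \ {d, c}, σ.rinv (σ.blockMax f) =
      ∑ f ∈ univ \ {c, d}, π.rinv (π.blockMax f) := by
    rw [pair_comm]
    refine sum_congr rfl fun f hf => ?_
    simp only [mem_sdiff, mem_insert, mem_singleton, not_or] at hf
    exact rinv_blockMax_swapOn hcd hf.2.1 hf.2.2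
  have hgt : #{a | d < σ.w a} = #{a | d < π.w a} := card_lt_w_swapOn hcd hcd.ne'
  have hsplit := π.card_filter_lt_w_eq_add hcd univ
  have hsplit' := π.card_filter_lt_w_eq_add hcd {a | a < π.blockMax d}
  simp only [filter_filter] at hsplit'
  have hrinv : π.rinv (π.blockMax d) = #{a | a < π.blockMax d ∧ d < π.w a} := by
    rw [rinv, w_blockMax]
  have hσc : σ.rinv (σ.blockMax c) = _ := π.rinv_blockMax_swapTail hcd
  have hblock := π.card_block_eq_add_one d
  simp only [rinvStat]
  omega

end Adjacent

theorem sum_rinvStat_eq_of_covBy {M : Type*} [AddCommMonoid M] {c d : Fin K} (hcd : c ⋖ d)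
    (O : Finset (Fin n)) (F : ℕ → M) :
    ∑ π ∈ univ.filter (fun π : SetPartition n K => π.openers = O), F (π.rinvStat c) =
      ∑ π ∈ univ.filter (fun π : SetPartition n K => π.openers = O), F (π.rinvStat d + 1) := by
  refine sum_nbij' (swapTail · hcd.le d) (swapTail · hcd.le c) ?_ ?_ ?_ ?_ ?_
  · simp [openers_swapTail]
  · simp [openers_swapTail]
  · intro π _
    simpa only [Equiv.swap_apply_right] using π.swapTail_swapTail hcd.le d
  · intro π _
    simpa only [Equiv.swap_apply_left] using π.swapTail_swapTail hcd.le c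
  · intro π _
    rw [π.rinvStat_swapTail hcd]

theorem sum_rinvStat_eq {M : Type*} [AddCommMonoid M] {k : ℕ} (O : Finset (Fin n))
    (F : ℕ → M) (c : Fin (k + 1)) :
    ∑ π ∈ univ.filter (fun π : SetPartition n (k + 1) => π.openers = O), F (π.rinvStat c) =
      ∑ π ∈ univ.filter (fun π : SetPartition n (k + 1) => π.openers = O),
        F (π.rinvSet π.closers + (k - c)) := by
  induction c using Fin.reverseInduction generalizing F with
  | last => simp [rinvStat, nrinv_blockMax_last]
  | cast i ih =>
    rw [sum_rinvStat_eq_of_covBy (Fin.castSucc_covBy_succ i), ih fun t => F (t + 1)]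
    refine sum_congr rfl fun π _ => congrArg F ?_
    simp only [Fin.val_succ, Fin.val_castSucc]
    omega

end SetPartition

/-- Let `m ≥ 1` and `k ≥ 0` with `k+1 ≤ m`, let `O ⊆ [m]` with `1 ∈ O`
and `#O = k+1`, and let `i ∈ [k]`. Then for every real `q > 0`:
`q^i · Σ_{π ∈ P(m,k+1;O)} q^{-rinv(F(π),π)} = Σ_{π ∈ P(m,k+1;O)} q^{stat_{i+1}(π)}`,
where `stat_j(π) = k - rinv(F(π),π) - nrinv(g(B_j),π)` and `B_{i+1}` has Fin-index `i`. -/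
theorem q_pow_sum_rinv_eq_sum_stat (m k : ℕ)
    (O : Finset (Fin m))
    (i : ℕ) (hik : i ≤ k) (q : ℝ) (hq : 0 < q) :
    q ^ (i : ℤ) *
        ∑ π ∈ Finset.univ.filter (fun π : SetPartition m (k + 1) => π.openers = O),
          q ^ (-(π.rinvSet π.closers : ℤ)) =
      ∑ π ∈ Finset.univ.filter (fun π : SetPartition m (k + 1) => π.openers = O),
        q ^ ((k : ℤ) - (π.rinvSet π.closers : ℤ)
              - (π.nrinv (π.blockMax ⟨i, by omega⟩) : ℤ)) := by
  have key := SetPartition.sum_rinvStat_eq O (fun t : ℕ => q ^ ((k : ℤ) - t))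
    (⟨i, by omega⟩ : Fin (k + 1))
  rw [mul_sum]
  calc _ = ∑ π ∈ univ.filter (fun π : SetPartition m (k + 1) => π.openers = O),
        q ^ ((k : ℤ) - ((π.rinvSet π.closers + (k - i) : ℕ) : ℤ)) := by
        refine sum_congr rfl fun π _ => ?_
        rw [← zpow_add₀ hq.ne']
        congr 1
        omega
    _ = _ := by
        rw [← key]
        refine sum_congr rfl fun π _ => ?_
        simp only [SetPartition.rinvStat, Nat.cast_add]
        ring_nf
end

section
/- Let n ≥ 2, n ≥ k ≥ 1, let π ∈ P(n,k), and let π' be the partition of [n−1] obtained from π by deleting the element n. (a) If {n} is a block of π, then π' ∈ P(n−1,k−1) and mak(π) = mak(π') + (k−1). (b) If n lies in a block B_i of π with #B_i ≥ 2, then π' ∈ P(n−1,k) and mak(π) = mak(π') + (k−1) − nrinv(g,π'), where g = max(B_i \ {n}). -/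
open Finset Polynomial

/-!
Deleting `n` changes neither the relative order of the other letters nor which of them are
openers; among the closers it only adds `g`, the previous maximum of the block of `n`, unless
`{n}` is a block. So for `i < n` the coordinates `ros_i` and `lcs_i` of `π` and `π'` agree,
except that `lcs_i(π')` also counts `g` for the `nrinv(g, π')` indices `i > g` with `w_i > w_g`.
Since every block has exactly one opener and one closer, the last coordinates are
`ros_n(π) = k - w_n` and `lcs_n(π) = w_n - 1`, which sum to `k - 1`.
-/

lemma Fin.card_eq_card_of_castSucc_mem_iff {N : ℕ} {s : Finset (Fin N)}
    {t : Finset (Fin (N + 1))} (hlast : Fin.last N ∉ t)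
    (h : ∀ a : Fin N, a.castSucc ∈ t ↔ a ∈ s) : #t = #s := by
  suffices t = s.map Fin.castSuccEmb by rw [this, card_map]
  ext j
  rcases Fin.eq_castSucc_or_eq_last j with ⟨a, rfl⟩ | rfl
  · simp [h]
  · simp [hlast, Fin.castSucc_ne_last]

namespace SetPartition

section Blocks

variable {n k : ℕ} (π : SetPartition n k)

@[simp]
lemma mem_openers {i : Fin n} : i ∈ π.openers ↔ ∀ j < i, π.w j ≠ π.w i := by
  simp [openers]

@[simp]
lemma mem_closers {i : Fin n} : i ∈ π.closers ↔ ∀ j, i < j → π.w j ≠ π.w i := by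
  simp [closers]

lemma injOn_w_openers : Set.InjOn π.w π.openers := by
  intro a ha b hb hab
  by_contra hne
  rcases lt_or_gt_of_ne hne with h | h
  · exact (π.mem_openers.1 hb) a h hab
  · exact (π.mem_openers.1 ha) b h hab.symm

lemma injOn_w_closers : Set.InjOn π.w π.closers := by
  intro a ha b hb hab
  by_contra hne
  rcases lt_or_gt_of_ne hne with h | h
  · exact (π.mem_closers.1 ha) b h hab.symm
  · exact (π.mem_closers.1 hb) a h hab

lemma w_blockMax_s18 (c : Fin k) : π.w (π.blockMax c) = c :=
  (mem_filter.1 (max'_mem (univ.filter (π.w · = c)) _)).2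

lemma blockMax_mem_closers (c : Fin k) : π.blockMax c ∈ π.closers := by
  refine π.mem_closers.2 fun j hj hwj => (le_max' _ j ?_).not_gt hj
  simp [hwj, w_blockMax_s18]

lemma image_w_openers : π.openers.image π.w = univ := by
  refine eq_univ_of_forall fun c => ?_
  obtain ⟨i, hi⟩ := π.surj c
  obtain ⟨j, hj, hmin⟩ := exists_min_image (univ.filter (π.w · = c)) id
    ⟨i, mem_filter.2 ⟨mem_univ i, hi⟩⟩
  have hjc : π.w j = c := (mem_filter.1 hj).2
  refine mem_image.2 ⟨j, π.mem_openers.2 fun a ha hwa => ?_, hjc⟩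
  exact (hmin a (mem_filter.2 ⟨mem_univ a, hwa.trans hjc⟩)).not_gt ha

lemma image_w_closers : π.closers.image π.w = univ :=
  eq_univ_of_forall fun c => mem_image.2 ⟨_, π.blockMax_mem_closers c, π.w_blockMax_s18 c⟩

lemma card_filter_openers (p : Fin k → Prop) [DecidablePred p] :
    #(π.openers.filter fun j => p (π.w j)) = #(univ.filter p) := by
  rw [← π.image_w_openers, filter_image,
    card_image_of_injOn (π.injOn_w_openers.mono (filter_subset _ _))]

lemma card_filter_closers (p : Fin k → Prop) [DecidablePred p] :
    #(π.closers.filter fun j => p (π.w j)) = #(univ.filter p) := by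
  rw [← π.image_w_closers, filter_image,
    card_image_of_injOn (π.injOn_w_closers.mono (filter_subset _ _))]

lemma filter_closers_w_eq (c : Fin k) :
    π.closers.filter (π.w · = c) = {π.blockMax c} :=
  eq_singleton_iff_unique_mem.2
    ⟨mem_filter.2 ⟨π.blockMax_mem_closers c, π.w_blockMax_s18 c⟩, fun _ hj =>
      π.injOn_w_closers (mem_filter.1 hj).1 (π.blockMax_mem_closers c)
        ((mem_filter.1 hj).2.trans (π.w_blockMax_s18 c).symm)⟩

lemma sum_card_filter_lt_eq_sum_nrinv (s : Finset (Fin n)) :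
    ∑ i, #(s.filter fun j => j < i ∧ π.w j < π.w i) = ∑ j ∈ s, π.nrinv j := by
  simp only [nrinv, card_filter]
  exact sum_comm

end Blocks

section DeleteLast

variable {N k k' : ℕ} {π : SetPartition (N + 1) k} {π' : SetPartition N k'}
  (hw : ∀ j : Fin N, (π'.w j : ℕ) = π.w j.castSucc)
include hw

lemma w_castSucc_lt_w_castSucc_iff (a b : Fin N) :
    π.w a.castSucc < π.w b.castSucc ↔ π'.w a < π'.w b := by
  rw [Fin.lt_def, Fin.lt_def, hw, hw]

lemma w_castSucc_eq_w_castSucc_iff (a b : Fin N) :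
    π.w a.castSucc = π.w b.castSucc ↔ π'.w a = π'.w b := by
  rw [Fin.ext_iff, Fin.ext_iff, hw, hw]

lemma castSucc_mem_openers_iff (a : Fin N) : a.castSucc ∈ π.openers ↔ a ∈ π'.openers := by
  simp only [mem_openers, Fin.forall_fin_succ', Fin.castSucc_lt_castSucc_iff,
    ne_eq, w_castSucc_eq_w_castSucc_iff hw, (Fin.castSucc_lt_last a).not_gt, false_imp_iff,
    and_true]

lemma castSucc_mem_closers_iff (a : Fin N) :
    a.castSucc ∈ π.closers ↔ a ∈ π'.closers ∧ (π'.w a : ℕ) ≠ π.w (Fin.last N) := by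
  simp only [mem_closers, Fin.forall_fin_succ', Fin.castSucc_lt_castSucc_iff,
    w_castSucc_eq_w_castSucc_iff hw, Fin.castSucc_lt_last, true_imp_iff, hw, Ne, Fin.val_inj,
    eq_comm (a := π.w (Fin.last N))]

lemma ros_eq : π.ros = π'.ros + (k - 1 - π.w (Fin.last N)) := by
  have hlast : #(π.openers.filter fun j => j < Fin.last N ∧ π.w (Fin.last N) < π.w j) =
      k - 1 - π.w (Fin.last N) := by
    rw [← Fin.card_Ioi, ← filter_lt_eq_Ioi, ← π.card_filter_openers]
    refine congrArg card (filter_congr fun j _ => and_iff_right_of_imp fun h => ?_)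
    exact lt_of_le_of_ne (Fin.le_last j) (by rintro rfl; exact h.false)
  have hcast (i : Fin N) :
      #(π.openers.filter fun j => j < i.castSucc ∧ π.w i.castSucc < π.w j) =
        #(π'.openers.filter fun j => j < i ∧ π'.w i < π'.w j) :=
    Fin.card_eq_card_of_castSucc_mem_iff (by simp [(Fin.le_last _).not_gt]) fun a => by
      simp only [mem_filter, castSucc_mem_openers_iff hw, Fin.castSucc_lt_castSucc_iff,
        w_castSucc_lt_w_castSucc_iff hw]
  rw [ros, ros, Fin.sum_univ_castSucc, hlast]
  simp only [hcast]

lemma lcs_add_sum_nrinv :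
    π.lcs + ∑ j ∈ π'.closers.filter (fun j => (π'.w j : ℕ) = π.w (Fin.last N)), π'.nrinv j =
      π'.lcs + π.w (Fin.last N) := by
  have hlast : #(π.closers.filter fun j => j < Fin.last N ∧ π.w j < π.w (Fin.last N)) =
      π.w (Fin.last N) := by
    rw [← Fin.card_Iio, ← filter_gt_eq_Iio, ← π.card_filter_closers]
    refine congrArg card (filter_congr fun j _ => and_iff_right_of_imp fun h => ?_)
    exact lt_of_le_of_ne (Fin.le_last j) (by rintro rfl; exact h.false)
  have hcast (i : Fin N) :
      #(π.closers.filter fun j => j < i.castSucc ∧ π.w j < π.w i.castSucc) =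
        #((π'.closers.filter fun j => j < i ∧ π'.w j < π'.w i).filter
          fun j => ¬(π'.w j : ℕ) = π.w (Fin.last N)) :=
    Fin.card_eq_card_of_castSucc_mem_iff (by simp [(Fin.le_last _).not_gt]) fun a => by
      simp only [mem_filter, castSucc_mem_closers_iff hw, Fin.castSucc_lt_castSucc_iff,
        w_castSucc_lt_w_castSucc_iff hw]
      tauto
  rw [← sum_card_filter_lt_eq_sum_nrinv, lcs, lcs, Fin.sum_univ_castSucc, hlast]
  simp only [hcast, filter_comm (fun j => (π'.w j : ℕ) = π.w (Fin.last N))]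
  rw [add_right_comm, ← sum_add_distrib]
  exact congrArg (· + _) (sum_congr rfl fun i _ =>
    (add_comm _ _).trans (card_filter_add_card_filter_not _))

end DeleteLast

lemma mak_eq_of_delete_singleton {N k : ℕ} {π : SetPartition (N + 1) k}
    {π' : SetPartition N (k - 1)}
    (hw : ∀ j : Fin N, (π'.w j : ℕ) = π.w j.castSucc) : π.mak = π'.mak + (k - 1) := by
  have htop : (π.w (Fin.last N) : ℕ) = k - 1 := by
    obtain ⟨i, hi⟩ := π.surj ⟨k - 1, Nat.sub_one_lt (π.w 0).pos.ne'⟩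
    rcases Fin.eq_castSucc_or_eq_last i with ⟨a, rfl⟩ | rfl
    · exact absurd ((hw a).trans (congrArg Fin.val hi)) (π'.w a).isLt.ne
    · rw [hi]
  have hros := ros_eq hw
  have hlcs := lcs_add_sum_nrinv hw
  rw [filter_false_of_mem fun j _ => by have := (π'.w j).isLt; omega, sum_empty] at hlcs
  rw [mak, mak]
  omega

lemma mak_add_nrinv_eq_of_delete {N k : ℕ} {π : SetPartition (N + 1) k}
    {π' : SetPartition N k}
    (hw : ∀ j : Fin N, π'.w j = π.w j.castSucc) :
    π.mak + π'.nrinv (π'.blockMax (π.w (Fin.last N))) = π'.mak + (k - 1) := by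
  have hw' (j : Fin N) : (π'.w j : ℕ) = π.w j.castSucc := congrArg Fin.val (hw j)
  have hros := ros_eq hw'
  have hlcs := lcs_add_sum_nrinv hw'
  simp only [Fin.val_inj, filter_closers_w_eq, sum_singleton] at hlcs
  have := (π.w (Fin.last N)).isLt
  rw [mak, mak]
  omega

end SetPartition

/-- Let `n ≥ 2`, `n ≥ k ≥ 1`, let `π ∈ P(n,k)`, and let `π'` be the
partition of `[n-1]` obtained from `π` by deleting the element `n` (the element `n` has
Fin-index `n - 1`; `π'` is characterized by its word agreeing with that of `π` on `[n-1]`).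
(a) If `{n}` is a block of `π`, then `π' ∈ P(n-1,k-1)` and `mak(π) = mak(π') + (k-1)`.
(b) If `n` lies in a block `B_i` of `π` with `#B_i ≥ 2`, then `π' ∈ P(n-1,k)` and
`mak(π) = mak(π') + (k-1) - nrinv(g,π')` where `g = max (B_i \ {n})`. -/
theorem mak_delete_last (n k : ℕ) (hn : 2 ≤ n)
    (π : SetPartition n k) :
    ((∀ j : Fin n, j ≠ ⟨n - 1, by omega⟩ → π.w j ≠ π.w ⟨n - 1, by omega⟩) →
      ∀ π' : SetPartition (n - 1) (k - 1),
        (∀ j : Fin (n - 1), ((π'.w j : ℕ) = (π.w (j.castLE (by omega)) : ℕ))) →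
        π.mak = π'.mak + (k - 1)) ∧
    ((∃ j : Fin n, j ≠ ⟨n - 1, by omega⟩ ∧ π.w j = π.w ⟨n - 1, by omega⟩) →
      ∀ π' : SetPartition (n - 1) k,
        (∀ j : Fin (n - 1), π'.w j = π.w (j.castLE (by omega))) →
        (π.mak : ℤ) = (π'.mak : ℤ) + ((k : ℤ) - 1)
          - (π'.nrinv (π'.blockMax (π.w ⟨n - 1, by omega⟩)) : ℤ)) := by
  obtain ⟨N, rfl⟩ : ∃ N, n = N + 1 := ⟨n - 1, by omega⟩
  refine ⟨fun _ π' hw => SetPartition.mak_eq_of_delete_singleton hw, fun _ π' hw => ?_⟩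
  have key : π.mak + π'.nrinv (π'.blockMax (π.w ⟨N + 1 - 1, by omega⟩)) = π'.mak + (k - 1) :=
    SetPartition.mak_add_nrinv_eq_of_delete hw
  have hk : 0 < k := (π.w 0).pos
  omega
end

section
/- For all integers n ≥ k ≥ 1 and every ordered partition π of [n] into k blocks: mak(π) + bmaj(π) = lmak'(π) + bmaj(π), mak'(π) + bmaj(π) = lmak(π) + bmaj(π), mak(π) + binv(π) = lmak'(π) + binv(π), and mak'(π) + binv(π) = lmak(π) + binv(π); equivalently, mak(π) = lmak'(π) and mak'(π) = lmak(π). -/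
open Finset

/-- An ordered partition of `[n] = {1,…,n}` into `k` blocks `(B₁,…,B_k)` (pairwise
disjoint nonempty sets covering `[n]`, in arbitrary order), encoded by the word
`w : Fin n → Fin k` where the element `i+1` of `[n]` lies in the block `B_{w i + 1}`. -/
structure OrdPartition (n k : ℕ) where
  w : Fin n → Fin k
  surj : Function.Surjective w

namespace OrdPartition

variable {n k : ℕ}

/-- The set of openers (smallest elements of their blocks). -/
def openers (π : OrdPartition n k) : Finset (Fin n) :=
  univ.filter fun i => ∀ j, j < i → π.w j ≠ π.w i

/-- The set of closers (largest elements of their blocks). -/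
def closers (π : OrdPartition n k) : Finset (Fin n) :=
  univ.filter fun i => ∀ j, i < j → π.w j ≠ π.w i

def ros (π : OrdPartition n k) : ℕ :=
  ∑ i, (π.openers.filter fun j => j < i ∧ π.w i < π.w j).card
def rob (π : OrdPartition n k) : ℕ :=
  ∑ i, (π.openers.filter fun j => i < j ∧ π.w i < π.w j).card
def rcs (π : OrdPartition n k) : ℕ :=
  ∑ i, (π.closers.filter fun j => j < i ∧ π.w i < π.w j).card
def rcb (π : OrdPartition n k) : ℕ :=
  ∑ i, (π.closers.filter fun j => i < j ∧ π.w i < π.w j).card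
def los (π : OrdPartition n k) : ℕ :=
  ∑ i, (π.openers.filter fun j => j < i ∧ π.w j < π.w i).card
def lob (π : OrdPartition n k) : ℕ :=
  ∑ i, (π.openers.filter fun j => i < j ∧ π.w j < π.w i).card
def lcs (π : OrdPartition n k) : ℕ :=
  ∑ i, (π.closers.filter fun j => j < i ∧ π.w j < π.w i).card
def lcb (π : OrdPartition n k) : ℕ :=
  ∑ i, (π.closers.filter fun j => i < j ∧ π.w j < π.w i).card

def mak (π : OrdPartition n k) : ℕ := π.ros + π.lcs
def mak' (π : OrdPartition n k) : ℕ := π.lob + π.rcb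
def lmak (π : OrdPartition n k) : ℤ :=
  (n : ℤ) * ((k : ℤ) - 1) - ((π.los : ℤ) + (π.rcs : ℤ))
def lmak' (π : OrdPartition n k) : ℤ :=
  (n : ℤ) * ((k : ℤ) - 1) - ((π.lcb : ℤ) + (π.rob : ℤ))

/-- `B_c > B_d`: every element of block `B_c` is greater than every element of `B_d`. -/
def BlockGT (π : OrdPartition n k) (c d : Fin k) : Prop :=
  ∀ a b : Fin n, π.w a = c → π.w b = d → b < a

instance (π : OrdPartition n k) (c d : Fin k) : Decidable (π.BlockGT c d) :=
  inferInstanceAs (Decidable (∀ a b : Fin n, π.w a = c → π.w b = d → b < a))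

/-- `bmaj(π)`: the sum of all block-descent indices `i ∈ [k-1]` (1-based) with
`B_i > B_{i+1}`; the 1-based index `i` corresponds to the Fin-index `i - 1`. -/
def bmaj (π : OrdPartition n k) : ℕ :=
  ∑ t ∈ Finset.range k,
    if h : t + 1 < k then (if π.BlockGT ⟨t, by omega⟩ ⟨t + 1, h⟩ then t + 1 else 0) else 0

/-- `binv(π) = #{(i,j) : i < j, B_i > B_j}`. -/
def binv (π : OrdPartition n k) : ℕ :=
  ((univ : Finset (Fin k × Fin k)).filter fun p => p.1 < p.2 ∧ π.BlockGT p.1 p.2).card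

end OrdPartition

/-
Openers and closers are each in bijection with the blocks, so for every `i ∈ [n]` the openers
of the blocks above that of `i` together with the closers of the blocks below it are `k - 1`
elements, one in each of the other blocks; splitting them by their position relative to `i`
gives `ros_i + rob_i + lcs_i + lcb_i = k - 1`, and symmetrically
`los_i + lob_i + rcs_i + rcb_i = k - 1`. Summing over `i`, both four-term totals are
`n (k - 1)`, which is exactly `mak = lmak'` and `mak' = lmak`.
-/

theorem Finset.card_filter_comp_of_bijOn {α β : Type*} [Fintype β] {s : Finset α} {f : α → β}
    (hf : Set.BijOn f s Set.univ) (p : β → Prop) [DecidablePred p] :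
    #{a ∈ s | p (f a)} = #{b | p b} :=
  card_nbij f (fun _ ha => mem_filter.2 ⟨mem_univ _, (mem_filter.1 ha).2⟩)
    (hf.injOn.mono fun _ ha => (mem_filter.1 ha).1)
    fun b hb => by
      obtain ⟨a, ha, rfl⟩ := hf.surjOn (Set.mem_univ b)
      exact ⟨a, mem_filter.2 ⟨ha, (mem_filter.1 hb).2⟩, rfl⟩

theorem Finset.card_filter_lt_add_card_filter_gt {α : Type*} [LinearOrder α] (s : Finset α)
    (i : α) (p : α → Prop) [DecidablePred p] (hi : ¬ p i) :
    #{j ∈ s | j < i ∧ p j} + #{j ∈ s | i < j ∧ p j} = #{j ∈ s | p j} := by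
  rw [← card_filter_add_card_filter_not (s := {j ∈ s | p j}) (· < i), filter_filter,
    filter_filter]
  congr 2 <;> ext j <;> simp only [mem_filter, not_lt]
  · tauto
  · exact ⟨fun ⟨hs, hij, hj⟩ => ⟨hs, hj, hij.le⟩,
      fun ⟨hs, hj, hij⟩ => ⟨hs, hij.lt_of_ne (by rintro rfl; exact hi hj), hj⟩⟩

theorem Fin.card_filter_gt_add_card_filter_lt {k : ℕ} (x : Fin k) :
    (#{c | x < c} + #{c | c < x} : ℤ) = k - 1 := by
  rw [filter_lt_eq_Ioi, filter_gt_eq_Iio, card_Ioi, card_Iio]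
  have := x.isLt
  omega

namespace OrdPartition

variable {n k : ℕ} (π : OrdPartition n k)

theorem exists_mem_openers (c : Fin k) : ∃ j ∈ π.openers, π.w j = c := by
  obtain ⟨i, hi⟩ := π.surj c
  let s : Finset (Fin n) := {j | π.w j = c}
  have hs : s.Nonempty := ⟨i, by simp [s, hi]⟩
  refine ⟨s.min' hs, ?_, by simpa [s] using s.min'_mem hs⟩
  simp only [openers, mem_filter, mem_univ, true_and]
  intro j hj hwj
  exact (s.min'_le j (by simpa [s, hwj] using s.min'_mem hs)).not_gt hj

theorem exists_mem_closers (c : Fin k) : ∃ j ∈ π.closers, π.w j = c := by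
  obtain ⟨i, hi⟩ := π.surj c
  let s : Finset (Fin n) := {j | π.w j = c}
  have hs : s.Nonempty := ⟨i, by simp [s, hi]⟩
  refine ⟨s.max' hs, ?_, by simpa [s] using s.max'_mem hs⟩
  simp only [closers, mem_filter, mem_univ, true_and]
  intro j hj hwj
  exact (s.le_max' j (by simpa [s, hwj] using s.max'_mem hs)).not_gt hj

theorem bijOn_w_openers : Set.BijOn π.w π.openers Set.univ := by
  refine ⟨Set.mapsTo_univ _ _, fun a ha b hb hab => ?_, fun c _ => π.exists_mem_openers c⟩
  simp only [openers, coe_filter, mem_univ, true_and, Set.mem_ofPred_eq] at ha hb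
  rcases lt_trichotomy a b with h | h | h
  · exact absurd hab (hb a h)
  · exact h
  · exact absurd hab.symm (ha b h)

theorem bijOn_w_closers : Set.BijOn π.w π.closers Set.univ := by
  refine ⟨Set.mapsTo_univ _ _, fun a ha b hb hab => ?_, fun c _ => π.exists_mem_closers c⟩
  simp only [closers, coe_filter, mem_univ, true_and, Set.mem_ofPred_eq] at ha hb
  rcases lt_trichotomy a b with h | h | h
  · exact absurd hab.symm (ha b h)
  · exact h
  · exact absurd hab (hb a h)

theorem ros_add_rob : π.ros + π.rob = ∑ i, #{j ∈ π.openers | π.w i < π.w j} := by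
  rw [ros, rob, ← sum_add_distrib]
  exact sum_congr rfl fun i _ => card_filter_lt_add_card_filter_gt _ i _ (lt_irrefl _)

theorem los_add_lob : π.los + π.lob = ∑ i, #{j ∈ π.openers | π.w j < π.w i} := by
  rw [los, lob, ← sum_add_distrib]
  exact sum_congr rfl fun i _ => card_filter_lt_add_card_filter_gt _ i _ (lt_irrefl _)

theorem rcs_add_rcb : π.rcs + π.rcb = ∑ i, #{j ∈ π.closers | π.w i < π.w j} := by
  rw [rcs, rcb, ← sum_add_distrib]
  exact sum_congr rfl fun i _ => card_filter_lt_add_card_filter_gt _ i _ (lt_irrefl _)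

theorem lcs_add_lcb : π.lcs + π.lcb = ∑ i, #{j ∈ π.closers | π.w j < π.w i} := by
  rw [lcs, lcb, ← sum_add_distrib]
  exact sum_congr rfl fun i _ => card_filter_lt_add_card_filter_gt _ i _ (lt_irrefl _)

theorem card_openers_above_add_card_closers_below (i : Fin n) :
    (#{j ∈ π.openers | π.w i < π.w j} + #{j ∈ π.closers | π.w j < π.w i} : ℤ) = k - 1 := by
  rw [card_filter_comp_of_bijOn π.bijOn_w_openers (π.w i < ·),
    card_filter_comp_of_bijOn π.bijOn_w_closers (· < π.w i)]
  exact Fin.card_filter_gt_add_card_filter_lt _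

theorem card_openers_below_add_card_closers_above (i : Fin n) :
    (#{j ∈ π.openers | π.w j < π.w i} + #{j ∈ π.closers | π.w i < π.w j} : ℤ) = k - 1 := by
  rw [card_filter_comp_of_bijOn π.bijOn_w_openers (· < π.w i),
    card_filter_comp_of_bijOn π.bijOn_w_closers (π.w i < ·), add_comm]
  exact Fin.card_filter_gt_add_card_filter_lt _

theorem ros_add_rob_add_lcs_add_lcb :
    ((π.ros + π.rob + (π.lcs + π.lcb) : ℕ) : ℤ) = n * (k - 1) := calc
  _ = ∑ i, (#{j ∈ π.openers | π.w i < π.w j} + #{j ∈ π.closers | π.w j < π.w i} : ℤ) := by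
    rw [ros_add_rob, lcs_add_lcb, ← sum_add_distrib]
    push_cast
    rfl
  _ = ∑ _ : Fin n, ((k : ℤ) - 1) := sum_congr rfl fun i _ =>
    π.card_openers_above_add_card_closers_below i
  _ = n * (k - 1) := by simp [mul_sub]

theorem los_add_lob_add_rcs_add_rcb :
    ((π.los + π.lob + (π.rcs + π.rcb) : ℕ) : ℤ) = n * (k - 1) := calc
  _ = ∑ i, (#{j ∈ π.openers | π.w j < π.w i} + #{j ∈ π.closers | π.w i < π.w j} : ℤ) := by
    rw [los_add_lob, rcs_add_rcb, ← sum_add_distrib]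
    push_cast
    rfl
  _ = ∑ _ : Fin n, ((k : ℤ) - 1) := sum_congr rfl fun i _ =>
    π.card_openers_below_add_card_closers_above i
  _ = n * (k - 1) := by simp [mul_sub]

theorem mak_eq_lmak' : (π.mak : ℤ) = π.lmak' := by
  rw [mak, lmak', ← ros_add_rob_add_lcs_add_lcb]
  push_cast
  ring

theorem mak'_eq_lmak : (π.mak' : ℤ) = π.lmak := by
  rw [mak', lmak, ← los_add_lob_add_rcs_add_rcb]
  push_cast
  ring

end OrdPartition

theorem ordPartition_mak_eq_lmak'_general (n k : ℕ)
    (π : OrdPartition n k) :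
    ((π.mak : ℤ) + (π.bmaj : ℤ) = π.lmak' + (π.bmaj : ℤ)) ∧
    ((π.mak' : ℤ) + (π.bmaj : ℤ) = π.lmak + (π.bmaj : ℤ)) ∧
    ((π.mak : ℤ) + (π.binv : ℤ) = π.lmak' + (π.binv : ℤ)) ∧
    ((π.mak' : ℤ) + (π.binv : ℤ) = π.lmak + (π.binv : ℤ)) ∧
    (π.mak : ℤ) = π.lmak' ∧ (π.mak' : ℤ) = π.lmak := by
  rw [π.mak_eq_lmak', π.mak'_eq_lmak]
  exact ⟨rfl, rfl, rfl, rfl, rfl, rfl⟩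

/-- For all integers `n ≥ k ≥ 1` and every ordered partition `π` of
`[n]` into `k` blocks: `mak + bmaj = lmak' + bmaj`, `mak' + bmaj = lmak + bmaj`,
`mak + binv = lmak' + binv`, `mak' + binv = lmak + binv`; equivalently `mak(π) = lmak'(π)`
and `mak'(π) = lmak(π)`. -/
theorem ordPartition_mak_eq_lmak' (n k : ℕ) (hk : 1 ≤ k) (hkn : k ≤ n)
    (π : OrdPartition n k) :
    ((π.mak : ℤ) + (π.bmaj : ℤ) = π.lmak' + (π.bmaj : ℤ)) ∧
    ((π.mak' : ℤ) + (π.bmaj : ℤ) = π.lmak + (π.bmaj : ℤ)) ∧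
    ((π.mak : ℤ) + (π.binv : ℤ) = π.lmak' + (π.binv : ℤ)) ∧
    ((π.mak' : ℤ) + (π.binv : ℤ) = π.lmak + (π.binv : ℤ)) ∧
    (π.mak : ℤ) = π.lmak' ∧ (π.mak' : ℤ) = π.lmak :=
  ordPartition_mak_eq_lmak'_general n k π
end
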